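/- Let τ be an indeterminate, and for integers k ≥ 1, k' ≥ 0 and ℓ, m ≥ 1 define T_{ℓm}(k,k') := Σ_{r≥0} C(ℓ+k−1, 2m−ℓ−r)·C(m+k', r)·τ^{2r} in ℤ[τ], where C(a,b) is the binomial coefficient (0 if b < 0 or b > a), and set T_{ℓ,0}(k,k') := Σ_{r≥0} C(ℓ+k−1, −ℓ−r)·C(k', r)·τ^{2r} (which is 0 for ℓ ≥ 1). Then for all integers ℓ ≥ 1, m ≥ 1, k ≥ 1 and k' ≥ 1: T_{ℓm}(k, k'−1) + τ²·T_{ℓ+1,m}(k, k'−1) = T_{ℓm}(k, k') + τ²·T_{ℓ,m−1}(k, k'). -/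

import Mathlib

/-
Coefficientwise the identity is Pascal's rule applied twice: writing `a = ℓ + k - 1`,
`c = m + k' - 1`, `s = 2m - ℓ - r`, the coefficient of `τ^{2r}` is
`C(a,s) C(c,r) + C(a+1,s) C(c,r-1)` on the left and `C(a,s) C(c+1,r) + C(a,s-1) C(c,r-1)` on
the right, and both equal `C(a,s) C(c,r) + C(a,s) C(c,r-1) + C(a,s-1) C(c,r-1)`.
-/

open Polynomial Finset

/-- Binomial coefficient `C(a,b)` for integer arguments, equal to `0` if `b < 0` or `b > a`
    (for `a ≥ 0`). -/
def intChoose (a b : ℤ) : ℤ := if 0 ≤ b then (a.toNat.choose b.toNat : ℤ) else 0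

/-- The matrix entry `T_{ℓm}(k,k') = ∑_{r ≥ 0} C(ℓ+k-1, 2m-ℓ-r) C(m+k', r) τ^{2r}` in `ℤ[τ]`.
    (The sum over `r ≥ 0` is finite; all terms with `r > 2m` vanish since then
    `2m - ℓ - r < 0` for `ℓ ≥ 1`.) -/
noncomputable def Tent (k k' ℓ m : ℤ) : Polynomial ℤ :=
  ∑ r ∈ Finset.range ((2 * m).toNat + 1),
    Polynomial.C (intChoose (ℓ + k - 1) (2 * m - ℓ - (r : ℤ)) * intChoose (m + k') (r : ℤ)) *
      Polynomial.X ^ (2 * r)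

lemma intChoose_of_neg (a : ℤ) {b : ℤ} (hb : b < 0) : intChoose a b = 0 :=
  if_neg (by omega)

lemma intChoose_succ {a : ℤ} (ha : 0 ≤ a) (b : ℤ) :
    intChoose (a + 1) b = intChoose a b + intChoose a (b - 1) := by
  unfold intChoose
  rcases lt_trichotomy b 0 with hb | rfl | hb
  · simp only [if_neg (show ¬ 0 ≤ b by omega), if_neg (show ¬ 0 ≤ b - 1 by omega), add_zero]
  · simp
  · simp only [if_pos hb.le, if_pos (show 0 ≤ b - 1 by omega)]
    obtain ⟨j, rfl⟩ : ∃ j : ℕ, b = j + 1 := ⟨b.toNat - 1, by omega⟩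
    rw [show (a + 1).toNat = a.toNat + 1 by omega, show ((j : ℤ) + 1).toNat = j + 1 by omega,
      add_sub_cancel_right, Int.toNat_natCast, Nat.choose_succ_succ', Nat.cast_add, add_comm]

lemma intChoose_mul_pascal {a c : ℤ} (ha : 0 ≤ a) (hc : 0 ≤ c) (s x : ℤ) :
    intChoose a s * intChoose c x + intChoose (a + 1) s * intChoose c (x - 1) =
      intChoose a s * intChoose (c + 1) x + intChoose a (s - 1) * intChoose c (x - 1) := by
  rw [intChoose_succ ha, intChoose_succ hc]
  ring

noncomputable def evenPoly (f : ℤ → ℤ) (n : ℕ) : ℤ[X] :=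
  ∑ r ∈ range n, C (f r) * X ^ (2 * r)

lemma evenPoly_add (f g : ℤ → ℤ) (n : ℕ) :
    evenPoly f n + evenPoly g n = evenPoly (f + g) n := by
  simp only [evenPoly, ← sum_add_distrib, Pi.add_apply, C_add, add_mul]

lemma evenPoly_congr {f g : ℤ → ℤ} {n : ℕ} (h : ∀ r : ℕ, f r = g r) :
    evenPoly f n = evenPoly g n :=
  sum_congr rfl fun r _ => by rw [h r]

lemma evenPoly_eq_of_le {f : ℤ → ℤ} {n N : ℕ} (hnN : n ≤ N) (hf : ∀ r : ℕ, n ≤ r → f r = 0) :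
    evenPoly f n = evenPoly f N :=
  sum_subset (range_subset_range.2 hnN) fun r _ hr => by
    rw [hf r (by simpa using hr), map_zero, zero_mul]

lemma X_sq_mul_evenPoly {f : ℤ → ℤ} (hf : f (-1) = 0) (n : ℕ) :
    X ^ 2 * evenPoly f n = evenPoly (fun r => f (r - 1)) (n + 1) := by
  rw [evenPoly, evenPoly, sum_range_succ', mul_sum]
  simp only [Nat.cast_zero, zero_sub, hf, map_zero, zero_mul, add_zero, Nat.cast_succ,
    add_sub_cancel_right]
  exact sum_congr rfl fun r _ => by ring

def tentCoeff (k k' ℓ m r : ℤ) : ℤ :=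
  intChoose (ℓ + k - 1) (2 * m - ℓ - r) * intChoose (m + k') r

lemma Tent_eq_evenPoly {k k' ℓ m : ℤ} (hℓ : 1 ≤ ℓ) {n : ℕ} (hn : (2 * m).toNat + 1 ≤ n) :
    Tent k k' ℓ m = evenPoly (tentCoeff k k' ℓ m) n := by
  have hTent : Tent k k' ℓ m = evenPoly (tentCoeff k k' ℓ m) ((2 * m).toNat + 1) := by
    unfold Tent evenPoly tentCoeff; rfl
  refine hTent.trans (evenPoly_eq_of_le hn fun r hr => ?_)
  rw [tentCoeff, intChoose_of_neg _ (by omega), zero_mul]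

lemma X_sq_mul_Tent {k k' ℓ m : ℤ} (hℓ : 1 ≤ ℓ) {n : ℕ} (hn : (2 * m).toNat + 1 ≤ n) :
    X ^ 2 * Tent k k' ℓ m = evenPoly (fun r => tentCoeff k k' ℓ m (r - 1)) (n + 1) := by
  rw [Tent_eq_evenPoly hℓ hn, X_sq_mul_evenPoly]
  rw [tentCoeff, intChoose_of_neg (m + k') (by omega : (-1 : ℤ) < 0), mul_zero]

lemma tentCoeff_pascal {k k' ℓ m : ℤ} (hℓk : 1 ≤ ℓ + k) (hmk' : 1 ≤ m + k') (r : ℤ) :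
    tentCoeff k (k' - 1) ℓ m r + tentCoeff k (k' - 1) (ℓ + 1) m (r - 1) =
      tentCoeff k k' ℓ m r + tentCoeff k k' ℓ (m - 1) (r - 1) := by
  have key := intChoose_mul_pascal (a := ℓ + k - 1) (c := m + k' - 1) (by omega) (by omega)
    (2 * m - ℓ - r) r
  simp only [tentCoeff]
  convert key using 3 <;> ring_nf

/-- The entrywise Pascal-rule identity:
    `T_{ℓm}(k,k'-1) + τ² T_{ℓ+1,m}(k,k'-1) = T_{ℓm}(k,k') + τ² T_{ℓ,m-1}(k,k')`. -/
theorem Tent_pascal (ℓ m k k' : ℤ) (hℓ : 1 ≤ ℓ) (hm : 1 ≤ m) (hk : 1 ≤ k) (hk' : 1 ≤ k') :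
    Tent k (k' - 1) ℓ m + Polynomial.X ^ 2 * Tent k (k' - 1) (ℓ + 1) m =
      Tent k k' ℓ m + Polynomial.X ^ 2 * Tent k k' ℓ (m - 1) := by
  set n := (2 * m).toNat + 1
  rw [Tent_eq_evenPoly hℓ (n := n + 1) (by omega), Tent_eq_evenPoly hℓ (n := n + 1) (by omega),
    X_sq_mul_Tent (by omega) le_rfl, X_sq_mul_Tent hℓ (n := n) (by omega),
    evenPoly_add, evenPoly_add]
  exact evenPoly_congr fun r => tentCoeff_pascal (by omega) (by omega) r
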